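/- For any density operator $\rho$ and Hermitian operator $A$ on a finite-dimensional Hilbert space, $\|[A,\rho]\|_1 \le \sqrt{\mathcal{F}_\rho(A)}$, where $\mathcal{F}_\rho(A)$ is the SLD quantum Fisher information. -/

import Mathlib

open Matrix
open scoped Kronecker ComplexOrder

variable {n m : Type*} [Fintype n] [DecidableEq n] [Fintype m] [DecidableEq m]

open Classical in
/-- square root of a matrix (zero if not PSD) -/
noncomputable def msqrt (A : Matrix n n ℂ) : Matrix n n ℂ :=
  if h : A.PosSemidef then (h.1.eigenvectorUnitary : Matrix n n ℂ) *
    diagonal ((fun x : ℝ => (x : ℂ)) ∘ (√·) ∘ h.1.eigenvalues) *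
    (star h.1.eigenvectorUnitary : Matrix n n ℂ) else 0

/-- trace norm -/
noncomputable def traceNorm (X : Matrix n m ℂ) : ℝ :=
  ((msqrt (Xᴴ * X)).trace).re

def IsDensity (ρ : Matrix n n ℂ) : Prop := ρ.PosSemidef ∧ ρ.trace = 1

noncomputable def variance (σ A : Matrix n n ℂ) : ℝ :=
  (Matrix.trace (σ * (A * A))).re - ((Matrix.trace (σ * A)).re) ^ 2

/-- `L` is a symmetric logarithmic derivative for `(σ, W)`. -/
def IsSLD (σ W L : Matrix n n ℂ) : Prop :=
  L.IsHermitian ∧ L * σ + σ * L = ((-2 : ℂ) * Complex.I) • (W * σ - σ * W)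

/-- SLD Fisher information value associated with a given SLD `L`. -/
noncomputable def fisherVal (σ L : Matrix n n ℂ) : ℝ :=
  (Matrix.trace (σ * (L * L))).re

noncomputable def fidelity (ρ σ : Matrix n n ℂ) : ℝ :=
  ((msqrt (msqrt ρ * σ * msqrt ρ)).trace).re

noncomputable def purifiedDist (ρ σ : Matrix n n ℂ) : ℝ :=
  Real.sqrt (1 - fidelity ρ σ ^ 2)

/-- completely positive -/
def IsCompletelyPositive (Φ : Matrix n n ℂ →ₗ[ℂ] Matrix m m ℂ) : Prop :=
  ∀ (k : ℕ) (M : Matrix (Fin k × n) (Fin k × n) ℂ), M.PosSemidef →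
    (Matrix.of fun (p q : Fin k × m) => (Φ (Matrix.of fun i j => M (p.1, i) (q.1, j))) p.2 q.2).PosSemidef

def IsCPTP (Φ : Matrix n n ℂ →ₗ[ℂ] Matrix m m ℂ) : Prop :=
  IsCompletelyPositive Φ ∧ ∀ X, (Φ X).trace = X.trace

/-- partial trace over the second factor -/
noncomputable def ptraceR {k r : Type*} [Fintype k] [Fintype r]
    (M : Matrix (k × r) (k × r) ℂ) : Matrix k k ℂ :=
  Matrix.of fun i j => ∑ a : r, M (i, a) (j, a)


/-!
With `H = ½ (Lρ + ρL)` the SLD equation reads `[A, ρ] = i H`, so `‖[A, ρ]‖₁ = Tr |H| = Tr (B H)`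
for the Hermitian contraction `B = sign H`. By cyclicity of the trace, `Tr (B H)` is the real part
of `Tr (L ρ B)`, an inner product for the `ρ`-weighted form `⟪X, Y⟫ = Tr (Y ρ Xᴴ)`. Cauchy–Schwarz
bounds it by `√Tr (B ρ B) · √Tr (L ρ L) ≤ √Tr ρ · √F = √F`.
-/

open scoped MatrixOrder

namespace Matrix

section RCLike

variable {ι 𝕜 : Type*} [Fintype ι] [RCLike 𝕜]

lemma norm_trace_mul_mul_conjTranspose_le {M : Matrix ι ι 𝕜} (hM : M.PosSemidef)
    (x y : Matrix ι ι 𝕜) :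
    ‖(y * M * xᴴ).trace‖ ≤
      √(RCLike.re (x * M * xᴴ).trace) * √(RCLike.re (y * M * yᴴ).trace) := by
  let _ := M.toMatrixSeminormedAddCommGroup hM
  let _ := M.toMatrixInnerProductSpace hM
  exact norm_inner_le_norm (𝕜 := 𝕜) x y

lemma re_trace_mul_anticommutator {B L ρ : Matrix ι ι 𝕜} (hB : B.IsHermitian)
    (hL : L.IsHermitian) (hρ : ρ.IsHermitian) :
    RCLike.re (B * (L * ρ + ρ * L)).trace = 2 * RCLike.re (L * ρ * B).trace := by
  have hstar : star (L * ρ * B).trace = (B * (ρ * L)).trace := by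
    rw [← trace_conjTranspose, conjTranspose_mul, conjTranspose_mul, hB.eq, hL.eq, hρ.eq]
  rw [Matrix.mul_add, trace_add, map_add, ← hstar, RCLike.star_def, RCLike.conj_re,
    trace_mul_comm B (L * ρ)]
  ring

lemma IsHermitian.anticommutator {L ρ : Matrix ι ι 𝕜} (hL : L.IsHermitian) (hρ : ρ.IsHermitian) :
    (L * ρ + ρ * L).IsHermitian := by
  rw [IsHermitian, conjTranspose_add, conjTranspose_mul, conjTranspose_mul, hL.eq, hρ.eq, add_comm]

variable [DecidableEq ι]

lemma PosSemidef.trace_mul_nonneg {A P : Matrix ι ι 𝕜} (hA : A.PosSemidef)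
    (hP : P.PosSemidef) : 0 ≤ (A * P).trace := by
  obtain ⟨S, rfl⟩ := CStarAlgebra.nonneg_iff_eq_star_mul_self.mp hP.nonneg
  rw [← Matrix.mul_assoc, trace_mul_comm, ← Matrix.mul_assoc, star_eq_conjTranspose]
  exact (hA.mul_mul_conjTranspose_same S).trace_nonneg

lemma PosSemidef.trace_mul_mul_conjTranspose_le {A B : Matrix ι ι 𝕜} (hA : A.PosSemidef)
    (hB : Bᴴ * B ≤ 1) : (B * A * Bᴴ).trace ≤ A.trace := by
  have := hA.trace_mul_nonneg (Matrix.le_iff.mp hB)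
  rwa [Matrix.mul_sub, Matrix.mul_one, trace_sub, sub_nonneg, ← Matrix.mul_assoc,
    trace_mul_cycle] at this

lemma IsHermitian.cfc_abs_eq_cfc_sign_mul {H : Matrix ι ι 𝕜} (hH : H.IsHermitian) :
    cfc (fun x : ℝ => |x|) H = cfc (fun x : ℝ => (SignType.sign x : ℝ)) H * H := by
  simp only [← sign_mul_self]
  rw [cfc_mul _ _ H (finite_real_spectrum.continuousOn _), cfc_id' ℝ H hH.isSelfAdjoint]

lemma cfc_sign_mul_self_le_one (H : Matrix ι ι 𝕜) :
    cfc (fun x : ℝ => (SignType.sign x : ℝ)) H * cfc (fun x : ℝ => (SignType.sign x : ℝ)) H ≤ 1 := by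
  rw [← cfc_mul _ _ H (finite_real_spectrum.continuousOn _) (finite_real_spectrum.continuousOn _)]
  refine cfc_le_one _ H fun x _ => ?_
  rcases SignType.sign x with _ | _ | _ <;> norm_num

end RCLike

variable {ι : Type*} [Fintype ι] [DecidableEq ι]

lemma msqrt_eq_cfc {A : Matrix ι ι ℂ} (hA : A.PosSemidef) : msqrt A = cfc Real.sqrt A := by
  rw [msqrt, dif_pos hA, hA.1.cfc_eq, IsHermitian.cfc, Unitary.conjStarAlgAut_apply]
  rfl

lemma IsHermitian.msqrt_mul_self {H : Matrix ι ι ℂ} (hH : H.IsHermitian) :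
    msqrt (H * H) = cfc (fun x : ℝ => |x|) H := by
  have hHH : (H * H).PosSemidef := by
    simpa [hH.eq] using posSemidef_conjTranspose_mul_self H
  rw [msqrt_eq_cfc hHH, ← sq, ← cfc_comp_pow _ 2 H]
  simp only [Real.sqrt_sq_eq_abs]

lemma traceNorm_smul_of_isHermitian {H : Matrix ι ι ℂ} (hH : H.IsHermitian) {c : ℂ}
    (hc : ‖c‖ = 1) : traceNorm (c • H) = (cfc (fun x : ℝ => |x|) H).trace.re := by
  rw [traceNorm, conjTranspose_smul, hH.eq, smul_mul_smul, Complex.star_def, Complex.conj_mul',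
    hc, Complex.ofReal_one, one_pow, one_smul, hH.msqrt_mul_self]

end Matrix

open Matrix

lemma IsSLD.commutator_eq {ι : Type*} [Fintype ι] {σ W L : Matrix ι ι ℂ} (h : IsSLD σ W L) :
    W * σ - σ * W = Complex.I • ((2 : ℂ)⁻¹ • (L * σ + σ * L)) := by
  rw [h.2, smul_smul, smul_smul]
  have : Complex.I * 2⁻¹ * (-2 * Complex.I) = 1 := by
    field_simp
    simp
  rw [this, one_smul]

theorem traceNorm_commutator_le_sqrt_fisher_general (ρ A L : Matrix n n ℂ) (hρ : IsDensity ρ)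
    (hL : IsSLD ρ A L) :
    traceNorm (A * ρ - ρ * A) ≤ Real.sqrt (fisherVal ρ L) := by
  obtain ⟨hρ, hρtr⟩ := hρ
  set H := (2 : ℂ)⁻¹ • (L * ρ + ρ * L)
  set B := cfc (fun x : ℝ => (SignType.sign x : ℝ)) H
  have hH : H.IsHermitian := (hL.1.anticommutator hρ.1).smul (by simp [IsSelfAdjoint])
  have hB : B.IsHermitian := cfc_predicate _ H
  calc traceNorm (A * ρ - ρ * A) = (B * H).trace.re := by
        rw [hL.commutator_eq, traceNorm_smul_of_isHermitian hH (by simp),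
          hH.cfc_abs_eq_cfc_sign_mul]
    _ = (L * ρ * B).trace.re := by
        have := re_trace_mul_anticommutator hB hL.1 hρ.1
        rw [RCLike.re_to_complex, RCLike.re_to_complex] at this
        rw [Matrix.mul_smul, trace_smul, smul_eq_mul, ← Complex.ofReal_ofNat,
          ← Complex.ofReal_inv, Complex.re_ofReal_mul, this]
        ring
    _ ≤ ‖(L * ρ * Bᴴ).trace‖ := by rw [hB.eq]; exact Complex.re_le_norm _
    _ ≤ √(B * ρ * Bᴴ).trace.re * √(L * ρ * Lᴴ).trace.re :=
        norm_trace_mul_mul_conjTranspose_le hρ B L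
    _ ≤ √ρ.trace.re * √(fisherVal ρ L) := by
        gcongr
        · refine hρ.trace_mul_mul_conjTranspose_le ?_
          rw [hB.eq]
          exact cfc_sign_mul_self_le_one H
        · rw [hL.1.eq, fisherVal, trace_mul_cycle, trace_mul_comm]
    _ = √(fisherVal ρ L) := by simp [hρtr]

/-- The trace norm of [A, ρ] is bounded by the square root of the SLD Fisher information. -/
theorem traceNorm_commutator_le_sqrt_fisher (ρ A L : Matrix n n ℂ) (hρ : IsDensity ρ)
    (hA : A.IsHermitian) (hL : IsSLD ρ A L) :
    traceNorm (A * ρ - ρ * A) ≤ Real.sqrt (fisherVal ρ L) :=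
  traceNorm_commutator_le_sqrt_fisher_general ρ A L hρ hL
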